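/- Let $\rho$ be the two-qubit state $\frac{1}{2}(|+\rangle\langle+|\otimes|+\rangle\langle+| + |-\rangle\langle-|\otimes|\widetilde{+}\rangle\langle\widetilde{+}|)$. For every $n \geq 1$ and every positive semidefinite operator $A$ on $\mathbb{C}^{4^n}$ with $\mathrm{Tr}(A) = 4^n/2$ that decomposes as a sum of rank-one operators each supported on at most $2$ computational basis vectors, one has $\mathrm{Tr}(\rho^{\otimes n} A) \leq \frac{1}{2}\left(1 + \frac{\sqrt 2}{2}\right)$. -/

import Mathlib

/-!
The entries of `ρ` are `(1 + σ_x σ̄_y)/8` with `σ` taking the values `±1, ±i`, so the diagonal of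
`ρ` is `1/4` and its off-diagonal entries have modulus at most `√2/8`. Hence `ρ^{⊗n}` has diagonal
`4⁻ⁿ` and off-diagonal entries of modulus at most `(√2/2) 4⁻ⁿ`. For `φ` supported on two basis
vectors, `(∑ |φ_v|)² ≤ 2 ∑ |φ_v|²`, so `⟨φ, ρ^{⊗n} φ⟩ ≤ (1 + √2/2) 4⁻ⁿ ‖φ‖²`. Summing over the
decomposition of `A` with weights `λ_j` gives `Re Tr(ρ^{⊗n} A) ≤ (1 + √2/2) 4⁻ⁿ Tr A`.
-/

open Matrix ComplexOrder

noncomputable def plusV : Fin 2 → ℂ := fun _ => 1 / Real.sqrt 2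

noncomputable def minusV : Fin 2 → ℂ :=
  fun x => if x = 0 then 1 / Real.sqrt 2 else -(1 / Real.sqrt 2)

noncomputable def tplusV : Fin 2 → ℂ :=
  fun x => if x = 0 then 1 / Real.sqrt 2 else Complex.I / Real.sqrt 2

/-- The state `ρ = ½(|+⟩⟨+|⊗|+⟩⟨+| + |-⟩⟨-|⊗|+̃⟩⟨+̃|)`. -/
noncomputable def boundState : Matrix (Fin 2 × Fin 2) (Fin 2 × Fin 2) ℂ :=
  ((1 : ℂ) / 2) •
    (Matrix.vecMulVec (fun x => plusV x.1 * plusV x.2)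
        (star fun x : Fin 2 × Fin 2 => plusV x.1 * plusV x.2)
      + Matrix.vecMulVec (fun x => minusV x.1 * tplusV x.2)
        (star fun x : Fin 2 × Fin 2 => minusV x.1 * tplusV x.2))

/-- `ρ^{⊗n}` as a matrix indexed by `n`-tuples of basis labels. -/
noncomputable def boundStatePow (n : ℕ) :
    Matrix (Fin n → Fin 2 × Fin 2) (Fin n → Fin 2 × Fin 2) ℂ :=
  Matrix.of fun v w => ∏ k : Fin n, boundState (v k) (w k)

open Finset

/- The coordinates of `2 (|-⟩ ⊗ |+̃⟩)`. -/
def boundPhase (x : Fin 2 × Fin 2) : ℂ := (-1) ^ (x.1 : ℕ) * Complex.I ^ (x.2 : ℕ)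

lemma ofReal_sqrt_two_sq : ((Real.sqrt 2 : ℝ) : ℂ) ^ 2 = 2 := by
  exact_mod_cast Real.sq_sqrt zero_le_two

lemma plusV_mul_plusV (a b : Fin 2) : plusV a * plusV b = 1 / 2 := by
  simp only [plusV]; rw [div_mul_div_comm, one_mul, ← sq, ofReal_sqrt_two_sq]

lemma minusV_mul_tplusV (a b : Fin 2) : minusV a * tplusV b = boundPhase (a, b) / 2 := by
  fin_cases a <;> fin_cases b <;> simp [minusV, tplusV, boundPhase] <;> field_simp <;>
    simp [ofReal_sqrt_two_sq]

lemma boundState_apply (x y : Fin 2 × Fin 2) :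
    boundState x y = (1 + boundPhase x * star (boundPhase y)) / 8 := by
  simp only [boundState, Matrix.smul_apply, Matrix.add_apply, vecMulVec_apply, Pi.star_apply,
    plusV_mul_plusV, minusV_mul_tplusV, Prod.mk.eta, star_div₀, star_one, star_ofNat, smul_eq_mul]
  ring

lemma norm_boundPhase (x : Fin 2 × Fin 2) : ‖boundPhase x‖ = 1 := by
  simp [boundPhase]

lemma norm_one_add_boundPhase_le (x y : Fin 2 × Fin 2) (h : x ≠ y) :
    ‖1 + boundPhase x * star (boundPhase y)‖ ≤ Real.sqrt 2 := by
  -- `boundPhase` is injective onto the fourth roots of unity, so the product is `-1` or `±i`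
  obtain ⟨a, b⟩ := x; obtain ⟨c, d⟩ := y
  fin_cases a <;> fin_cases b <;> fin_cases c <;> fin_cases d <;>
    simp [boundPhase, Complex.norm_def, Complex.normSq_apply] at h ⊢ <;> norm_num

lemma norm_boundState_le (x y : Fin 2 × Fin 2) : ‖boundState x y‖ ≤ 1 / 4 := by
  have h : ‖1 + boundPhase x * star (boundPhase y)‖ ≤ 2 := by
    refine (norm_add_le _ _).trans ?_
    rw [norm_mul, norm_star, norm_boundPhase, norm_boundPhase]; norm_num
  rw [boundState_apply, norm_div, Complex.norm_ofNat]; linarith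

lemma norm_boundState_le_of_ne {x y : Fin 2 × Fin 2} (h : x ≠ y) :
    ‖boundState x y‖ ≤ Real.sqrt 2 / 2 * (1 / 4) := by
  rw [boundState_apply, norm_div, Complex.norm_ofNat]
  linarith [norm_one_add_boundPhase_le x y h]

section TensorPower

variable {𝕜 κ ι : Type*} [NormedField 𝕜] [Fintype ι] (M : Matrix κ κ 𝕜) {a : ℝ}

lemma norm_prod_apply_le_pow (hM : ∀ x y, ‖M x y‖ ≤ a) (v w : ι → κ) :
    ‖∏ k, M (v k) (w k)‖ ≤ a ^ Fintype.card ι := by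
  rw [norm_prod, ← card_univ, ← prod_const]
  exact prod_le_prod (fun _ _ => norm_nonneg _) fun k _ => hM _ _

lemma norm_prod_apply_le_mul_pow_of_ne {r : ℝ} (hM : ∀ x y, ‖M x y‖ ≤ a)
    (hoff : ∀ x y, x ≠ y → ‖M x y‖ ≤ r * a) {v w : ι → κ} (hvw : v ≠ w) :
    ‖∏ k, M (v k) (w k)‖ ≤ r * a ^ Fintype.card ι := by
  classical
  obtain ⟨k₀, hk₀⟩ := Function.ne_iff.mp hvw
  have : Nonempty ι := ⟨k₀⟩
  rw [norm_prod, ← mul_prod_erase _ _ (mem_univ k₀),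
    ← mul_pow_sub_one Fintype.card_ne_zero a, ← mul_assoc]
  have hrest : ∏ k ∈ univ.erase k₀, ‖M (v k) (w k)‖ ≤ a ^ (Fintype.card ι - 1) := by
    rw [← card_univ, ← card_erase_of_mem (mem_univ k₀), ← prod_const]
    exact prod_le_prod (fun _ _ => norm_nonneg _) fun k _ => hM _ _
  exact mul_le_mul (hoff _ _ hk₀) hrest (prod_nonneg fun _ _ => norm_nonneg _)
    ((norm_nonneg _).trans (hoff _ _ hk₀))

end TensorPower

section QuadraticForm

variable {𝕜 ι : Type*} [RCLike 𝕜] [Fintype ι]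

lemma sq_sum_norm_le_of_card_support_le [DecidableEq 𝕜] (φ : ι → 𝕜) {k : ℕ}
    (hφ : #{v | φ v ≠ 0} ≤ k) :
    (∑ v, ‖φ v‖) ^ 2 ≤ k * ∑ v, ‖φ v‖ ^ 2 := by
  have hsum : ∑ v ∈ {v | φ v ≠ 0}, ‖φ v‖ = ∑ v, ‖φ v‖ :=
    sum_filter_of_ne fun v _ h => norm_ne_zero_iff.mp h
  have hsum_sq : ∑ v ∈ {v | φ v ≠ 0}, ‖φ v‖ ^ 2 = ∑ v, ‖φ v‖ ^ 2 :=
    sum_filter_of_ne fun v _ h => norm_ne_zero_iff.mp (ne_zero_pow two_ne_zero h)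
  rw [← hsum, ← hsum_sq]
  exact sq_sum_le_card_mul_sum_sq.trans (by gcongr)

lemma norm_dotProduct_mulVec_le (B : Matrix ι ι 𝕜) (φ : ι → 𝕜) :
    ‖star φ ⬝ᵥ B *ᵥ φ‖ ≤ ∑ v, ∑ w, ‖φ v‖ * ‖B v w‖ * ‖φ w‖ := by
  simp only [dotProduct, mulVec, Pi.star_apply, mul_sum]
  refine (norm_sum_le _ _).trans (sum_le_sum fun v _ => (norm_sum_le _ _).trans_eq ?_)
  simp only [norm_mul, norm_star, mul_assoc]

lemma re_dotProduct_mulVec_le [DecidableEq 𝕜] {B : Matrix ι ι 𝕜} {d c : ℝ} (hc : 0 ≤ c)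
    (hdiag : ∀ v, ‖B v v‖ ≤ d) (hoff : ∀ v w, v ≠ w → ‖B v w‖ ≤ c)
    (φ : ι → 𝕜) {k : ℕ} (hφ : #{v | φ v ≠ 0} ≤ k) :
    RCLike.re (star φ ⬝ᵥ B *ᵥ φ) ≤ (d + (k - 1) * c) * ∑ v, ‖φ v‖ ^ 2 := by
  classical
  have hB : ∀ v w, ‖B v w‖ ≤ (d - c) * (if v = w then 1 else 0) + c := by
    intro v w
    by_cases h : v = w
    · subst h; simpa using hdiag v
    · simpa [h] using hoff v w h
  calc RCLike.re (star φ ⬝ᵥ B *ᵥ φ)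
      ≤ ∑ v, ∑ w, ‖φ v‖ * ‖B v w‖ * ‖φ w‖ :=
        (RCLike.re_le_norm _).trans (norm_dotProduct_mulVec_le B φ)
    _ ≤ ∑ v, ∑ w, ‖φ v‖ * ((d - c) * (if v = w then 1 else 0) + c) * ‖φ w‖ := by
        gcongr with v _ w _; exact hB v w
    _ = (d - c) * ∑ v, ‖φ v‖ ^ 2 + c * (∑ v, ‖φ v‖) ^ 2 := by
        simp only [mul_add, add_mul, sum_add_distrib, mul_ite, ite_mul, mul_one, mul_zero,
          zero_mul, sum_ite_eq, mem_univ, if_true, sq, mul_sum, sum_mul]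
        congr 1 <;> refine sum_congr rfl fun v _ => ?_ <;> ring_nf
    _ ≤ (d - c) * ∑ v, ‖φ v‖ ^ 2 + c * (k * ∑ v, ‖φ v‖ ^ 2) := by
        gcongr; exact sq_sum_norm_le_of_card_support_le φ hφ
    _ = (d + (k - 1) * c) * ∑ v, ‖φ v‖ ^ 2 := by ring

lemma re_dotProduct_star_self (φ : ι → 𝕜) :
    RCLike.re (φ ⬝ᵥ star φ) = ∑ v, ‖φ v‖ ^ 2 := by
  simp only [dotProduct, Pi.star_apply, RCLike.star_def, RCLike.mul_conj, map_sum,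
    RCLike.re_ofReal_pow]

lemma re_trace_mul_sum_vecMulVec_le [DecidableEq 𝕜] {κ : Type*} [Fintype κ] {B A : Matrix ι ι 𝕜} {d c : ℝ}
    (hc : 0 ≤ c) (hdiag : ∀ v, ‖B v v‖ ≤ d) (hoff : ∀ v w, v ≠ w → ‖B v w‖ ≤ c)
    (lam : κ → ℝ) (hlam : ∀ j, 0 ≤ lam j) (φ : κ → ι → 𝕜) {k : ℕ}
    (hφ : ∀ j, #{v | φ j v ≠ 0} ≤ k)
    (hA : A = ∑ j, (lam j : 𝕜) • vecMulVec (φ j) (star (φ j))) :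
    RCLike.re (B * A).trace ≤ (d + (k - 1) * c) * RCLike.re A.trace := by
  have hBA : RCLike.re (B * A).trace = ∑ j, lam j * RCLike.re (star (φ j) ⬝ᵥ B *ᵥ φ j) := by
    simp [hA, mul_sum, trace_sum, mul_vecMulVec, dotProduct_comm (B *ᵥ _), RCLike.smul_re]
  have htrA : RCLike.re A.trace = ∑ j, lam j * ∑ v, ‖φ j v‖ ^ 2 := by
    simp [hA, trace_sum, RCLike.smul_re, re_dotProduct_star_self]
  rw [hBA, htrA, mul_sum]
  refine sum_le_sum fun j _ => ?_
  rw [mul_left_comm]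
  exact mul_le_mul_of_nonneg_left (re_dotProduct_mulVec_le hc hdiag hoff (φ j) (hφ j)) (hlam j)

end QuadraticForm

theorem stmt_13_general (n : ℕ)
    (A : Matrix (Fin n → Fin 2 × Fin 2) (Fin n → Fin 2 × Fin 2) ℂ)
    (htr : A.trace = (4 : ℂ) ^ n / 2)
    (m : ℕ) (lam : Fin m → ℝ) (hlam : ∀ j, 0 ≤ lam j)
    (φ : Fin m → (Fin n → Fin 2 × Fin 2) → ℂ)
    (hsupp : ∀ j, (Finset.univ.filter fun v => φ j v ≠ 0).card ≤ 2)
    (hdecomp : A = ∑ j : Fin m,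
      ((lam j : ℂ)) • Matrix.vecMulVec (φ j) (star (φ j))) :
    ((boundStatePow n * A).trace).re ≤ 1 / 2 * (1 + Real.sqrt 2 / 2) := by
  have hdiag v : ‖boundStatePow n v v‖ ≤ (1 / 4) ^ n := by
    simpa [boundStatePow] using norm_prod_apply_le_pow boundState norm_boundState_le v v
  have hoff v w (hvw : v ≠ w) : ‖boundStatePow n v w‖ ≤ Real.sqrt 2 / 2 * (1 / 4) ^ n := by
    simpa [boundStatePow] using norm_prod_apply_le_mul_pow_of_ne boundState norm_boundState_le
      (fun _ _ => norm_boundState_le_of_ne) hvw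
  have hpow : (1 / 4 : ℝ) ^ n * 4 ^ n = 1 := by rw [← mul_pow]; norm_num
  calc ((boundStatePow n * A).trace).re
      ≤ ((1 / 4) ^ n + ((2 : ℕ) - 1) * (Real.sqrt 2 / 2 * (1 / 4) ^ n)) * A.trace.re :=
        re_trace_mul_sum_vecMulVec_le (by positivity) hdiag hoff lam hlam φ hsupp hdecomp
    _ = 1 / 2 * (1 + Real.sqrt 2 / 2) := by
        rw [htr, show (4 : ℂ) ^ n / 2 = ((4 ^ n / 2 : ℝ) : ℂ) by push_cast; rfl, Complex.ofReal_re]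
        linear_combination (1 / 2 + Real.sqrt 2 / 4) * hpow

theorem stmt_13 (n : ℕ) (hn : 1 ≤ n)
    (A : Matrix (Fin n → Fin 2 × Fin 2) (Fin n → Fin 2 × Fin 2) ℂ)
    (hPSD : A.PosSemidef) (htr : A.trace = (4 : ℂ) ^ n / 2)
    (m : ℕ) (lam : Fin m → ℝ) (hlam : ∀ j, 0 ≤ lam j)
    (φ : Fin m → (Fin n → Fin 2 × Fin 2) → ℂ)
    (hsupp : ∀ j, (Finset.univ.filter fun v => φ j v ≠ 0).card ≤ 2)
    (hdecomp : A = ∑ j : Fin m,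
      ((lam j : ℂ)) • Matrix.vecMulVec (φ j) (star (φ j))) :
    ((boundStatePow n * A).trace).re ≤ 1 / 2 * (1 + Real.sqrt 2 / 2) :=
  stmt_13_general n A htr m lam hlam φ hsupp hdecomp
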